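/- For every n ∈ ℕ, the unit vector system of X_n is weakly null in the following sense: for every sequence (τ_k)_{k≥1} of pairwise distinct elements of 2^ℕ, the sequence (e_{τ_k})_k of unit vectors converges weakly to 0 in X_n (the completion of (c00(2^ℕ), ‖·‖_n)); that is, f(e_{τ_k}) → 0 for every continuous linear functional f on X_n. -/

import Mathlib

/-!
Let `f` be a bounded functional and suppose `f (e_{τ k}) ≥ ε` along a subsequence. By compactness
of `2^ℕ` a further subsequence `t i` is a comb: it converges to a spine `σ` and leaves it at
strictly increasing heights `ℓ i`. A point `σ'` can follow at most one tooth `t x` beyond its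
branching height, and every tooth of a set `F ∈ 𝒢ₛ_{n+1}` branches from the root `σ'` of `F` at
height at least `min(F,σ') ≥ d`. Hence, up to the single index `x`, the trace `{i | t i ∈ F}` is
covered by `d ≤ ℓ i` traces of sets of `𝒢_n`: the traces lie in Schreier-type families. Repeated
averages, as for Schreier families, give convex combinations `x = ∑ a i • e_{t i}` with
`‖x‖_n ≤ δ`, while `f x ≥ ε`; this contradicts `|f x| ≤ ‖f‖ δ` for small `δ`. Applied to `f` and
`-f`, this gives `f (e_{τ k}) → 0`.
-/

abbrev Cantor : Type := ℕ → Bool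

/- `wedgeLen σ τ` is the length `|σ∧τ| ∈ ℕ∞` of the longest common initial segment
of `σ` and `τ` (`⊤` if `σ = τ`).  Since wedges `σ∧τ`, `σ∧τ'` of a common sequence are
initial segments of that sequence, comparisons `⊑`, `⊏`, `=` between such wedges are
equivalent to `≤`, `<`, `=` between their lengths. -/
open Classical in
noncomputable def wedgeLen (σ τ : Cantor) : ℕ∞ :=
  if h : σ = τ then ⊤ else ((Nat.find (Function.ne_iff.mp h) : ℕ) : ℕ∞)

/-- `GS n F σ m M` : the pair `(F,σ)` belongs to `𝒢ₛ_n` via a derivation attaching the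
values `min(F,σ) = m` and `max(F,σ) = M`. -/
inductive GS : ℕ → Finset Cantor → Cantor → ℕ∞ → ℕ∞ → Prop
  | base (d : ℕ) (τ : Fin (d + 1) → Cantor) (σ : Cantor) (F : Finset Cantor)
      (h1 : ∀ i, σ ≠ τ i)
      (h2 : 0 < wedgeLen σ (τ 0))
      (h3 : ∀ i j : Fin (d + 1), i < j → wedgeLen σ (τ i) < wedgeLen σ (τ j))
      (h4 : ((d + 1 : ℕ) : ℕ∞) ≤ wedgeLen σ (τ 0))
      (hF : ∀ x, x ∈ F ↔ ∃ i, x = τ i) :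
      GS 1 F σ (wedgeLen σ (τ 0)) (wedgeLen σ (τ (Fin.last d)))
  | up (n : ℕ) (F : Finset Cantor) (σ : Cantor) (m M : ℕ∞) :
      GS n F σ m M → GS (n + 1) F σ m M
  | skipped (n : ℕ) (d : ℕ) (Fs : Fin (d + 1) → Finset Cantor)
      (σs : Fin (d + 1) → Cantor) (mins maxs : Fin (d + 1) → ℕ∞)
      (σ : Cantor) (F : Finset Cantor)
      (hGS : ∀ i, GS n (Fs i) (σs i) (mins i) (maxs i))
      (hdisj : ∀ i j : Fin (d + 1), i ≠ j → ∀ x, x ∈ Fs i → x ∉ Fs j)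
      (hne : ∀ i, σ ≠ σs i)
      (h0 : 0 < wedgeLen σ (σs 0))
      (hmono : ∀ i j : Fin (d + 1), i < j → wedgeLen σ (σs i) < wedgeLen σ (σs j))
      (hlt : ∀ i, wedgeLen σ (σs i) < mins i)
      (hd : ((d + 1 : ℕ) : ℕ∞) ≤ wedgeLen σ (σs 0))
      (hF : ∀ x, x ∈ F ↔ ∃ i, x ∈ Fs i) :
      GS (n + 1) F σ (wedgeLen σ (σs 0)) (wedgeLen σ (σs (Fin.last d)))
  | attached (n : ℕ) (d : ℕ) (Fs : Fin (d + 1) → Finset Cantor)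
      (mins maxs : Fin (d + 1) → ℕ∞) (σ : Cantor) (F : Finset Cantor)
      (hGS : ∀ i, GS n (Fs i) σ (mins i) (maxs i))
      (hdisj : ∀ i j : Fin (d + 1), i ≠ j → ∀ x, x ∈ Fs i → x ∉ Fs j)
      (hord : ∀ i : Fin d, maxs i.castSucc < mins i.succ)
      (hd : ((d + 1 : ℕ) : ℕ∞) ≤ mins 0)
      (hF : ∀ x, x ∈ F ↔ ∃ i, x ∈ Fs i) :
      GS (n + 1) F σ (mins 0) (maxs (Fin.last d))

/-- The family `𝒢_n` of finite subsets of the Cantor set. -/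
def Gfam (n : ℕ) : Set (Finset Cantor) :=
  {F | F = ∅ ∨ ∃ σ m M, GS n F σ m M}

/-- The norm `‖·‖_n` on `c₀₀(2^ℕ)`. -/
noncomputable def gnorm (n : ℕ) (x : Cantor →₀ ℝ) : ℝ :=
  sSup {r : ℝ | ∃ F ∈ Gfam n, r = |∑ τ ∈ F, x τ|}

open Finset Filter Topology

section Wedge

open Classical in
lemma natCast_le_wedgeLen_iff {σ τ : Cantor} {m : ℕ} :
    (m : ℕ∞) ≤ wedgeLen σ τ ↔ ∀ j < m, σ j = τ j := by
  unfold wedgeLen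
  split_ifs with h
  · subst h; simp
  · rw [Nat.cast_le, Nat.le_find_iff]
    simp

lemma wedgeLen_comm (σ τ : Cantor) : wedgeLen σ τ = wedgeLen τ σ := by
  refine le_antisymm ?_ ?_ <;> refine ENat.forall_natCast_le_iff_le.mp fun m hm => ?_ <;>
    simpa only [natCast_le_wedgeLen_iff, eq_comm] using hm

lemma wedgeLen_eq_top_iff {σ τ : Cantor} : wedgeLen σ τ = ⊤ ↔ σ = τ := by
  unfold wedgeLen
  split_ifs with h <;> simp [h]

lemma min_wedgeLen_le_wedgeLen (a b c : Cantor) :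
    min (wedgeLen a b) (wedgeLen b c) ≤ wedgeLen a c := by
  refine ENat.forall_natCast_le_iff_le.mp fun m hm => ?_
  rw [le_min_iff, natCast_le_wedgeLen_iff, natCast_le_wedgeLen_iff] at hm
  exact natCast_le_wedgeLen_iff.mpr fun j hj => (hm.1 j hj).trans (hm.2 j hj)

end Wedge

namespace GS

lemma min_le_max_and_wedgeLen {n : ℕ} {F : Finset Cantor} {σ : Cantor} {m M : ℕ∞}
    (h : GS n F σ m M) : m ≤ M ∧ ∀ τ ∈ F, m ≤ wedgeLen σ τ := by
  induction h with
  | base d τs σ F _ _ hmono _ hF =>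
    have hle : Monotone fun k => wedgeLen σ (τs k) := StrictMono.monotone hmono
    refine ⟨hle (Fin.zero_le _), fun τ hτ => ?_⟩
    obtain ⟨k, rfl⟩ := (hF τ).mp hτ
    exact hle (Fin.zero_le k)
  | up _ _ _ _ _ _ ih => exact ih
  | skipped n d Fs σs mins maxs σ F _ _ _ _ hmono hlt _ hF ih =>
    have hle : Monotone fun k => wedgeLen σ (σs k) := StrictMono.monotone hmono
    refine ⟨hle (Fin.zero_le _), fun τ hτ => ?_⟩
    obtain ⟨k, hk⟩ := (hF τ).mp hτ
    calc wedgeLen σ (σs 0) ≤ wedgeLen σ (σs k) := hle (Fin.zero_le k)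
      _ = min (wedgeLen σ (σs k)) (wedgeLen (σs k) τ) :=
        (min_eq_left ((hlt k).trans_le ((ih k).2 τ hk)).le).symm
      _ ≤ wedgeLen σ τ := min_wedgeLen_le_wedgeLen _ _ _
  | attached n d Fs mins maxs σ F _ _ hord _ hF ih =>
    have hmins : ∀ k : Fin (d + 1), mins 0 ≤ mins k := by
      intro k
      induction k using Fin.induction with
      | zero => exact le_rfl
      | succ i hi => exact hi.trans ((ih i.castSucc).1.trans (hord i).le)
    refine ⟨(hmins _).trans (ih _).1, fun τ hτ => ?_⟩
    obtain ⟨k, hk⟩ := (hF τ).mp hτ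
    exact (hmins k).trans ((ih k).2 τ hk)

lemma min_le_wedgeLen {n : ℕ} {F : Finset Cantor} {σ : Cantor} {m M : ℕ∞}
    (h : GS n F σ m M) {τ : Cantor} (hτ : τ ∈ F) : m ≤ wedgeLen σ τ :=
  (min_le_max_and_wedgeLen h).2 τ hτ

end GS

structure IsComb (σ : Cantor) (t : ℕ → Cantor) (ℓ : ℕ → ℕ) : Prop where
  strictMono : StrictMono ℓ
  pos : ∀ i, 0 < ℓ i
  wedgeLen_eq : ∀ i, wedgeLen σ (t i) = ℓ i

namespace IsComb

variable {σ : Cantor} {t : ℕ → Cantor} {ℓ : ℕ → ℕ}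

lemma injective (hc : IsComb σ t ℓ) : Function.Injective t := fun i j h =>
  hc.strictMono.injective (by exact_mod_cast (hc.wedgeLen_eq i).symm.trans (h ▸ hc.wedgeLen_eq j))

lemma wedgeLen_le_of_lt (hc : IsComb σ t ℓ) {i j : ℕ} (hij : i < j) :
    wedgeLen (t j) (t i) ≤ ℓ i := by
  have h := min_wedgeLen_le_wedgeLen σ (t j) (t i)
  rw [hc.wedgeLen_eq, hc.wedgeLen_eq] at h
  exact (min_le_iff.mp h).resolve_left (not_le.mpr (by exact_mod_cast hc.strictMono hij))

lemma exists_forall_ne_wedgeLen_le (hc : IsComb σ t ℓ) (σ' : Cantor) :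
    ∃ x, ∀ i ≠ x, wedgeLen σ' (t i) ≤ ℓ i := by
  have two_beyond : ∀ i j, i < j → (ℓ i : ℕ∞) < wedgeLen σ' (t i) →
      (ℓ j : ℕ∞) < wedgeLen σ' (t j) → False := by
    intro i j hij hi hj
    have hmin := min_wedgeLen_le_wedgeLen (t j) σ' (t i)
    rw [wedgeLen_comm (t j)] at hmin
    have hℓ : (ℓ i : ℕ∞) < ℓ j := by exact_mod_cast hc.strictMono hij
    exact ((lt_min (hℓ.trans hj) hi).trans_le hmin).not_ge (hc.wedgeLen_le_of_lt hij)
  by_cases h : ∃ x, (ℓ x : ℕ∞) < wedgeLen σ' (t x)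
  · obtain ⟨x, hx⟩ := h
    refine ⟨x, fun i hix => le_of_not_gt fun hi => ?_⟩
    rcases hix.lt_or_gt with hlt | hlt
    exacts [two_beyond i x hlt hi hx, two_beyond x i hlt hx hi]
  · simp only [not_exists, not_lt] at h
    exact ⟨0, fun i _ => h i⟩

end IsComb

lemma exists_isComb_comp {u : ℕ → Cantor} (hu : Function.Injective u) :
    ∃ σ g ℓ, StrictMono g ∧ IsComb σ (u ∘ g) ℓ := by
  obtain ⟨σ, φ, hφ, hlim⟩ := CompactSpace.tendsto_subseq u
  have hne : ∀ᶠ k in atTop, u (φ k) ≠ σ := by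
    rw [← Nat.cofinite_eq_atTop]
    exact (hu.comp hφ.injective).tendsto_cofinite.eventually (eventually_cofinite_ne σ)
  have hagree : ∀ m, ∀ᶠ k in atTop, ∀ j ∈ range m, u (φ k) j = σ j := fun m =>
    (eventually_all_finset _).mpr fun j _ =>
      tendsto_pure.mp
        (by simpa only [nhds_discrete, Function.comp_apply] using tendsto_pi_nhds.mp hlim j)
  set w : ℕ → ℕ := fun k => (wedgeLen σ (u (φ k))).toNat
  have hw : Tendsto w atTop atTop := tendsto_atTop.mpr fun m =>
    (hne.and (hagree m)).mono fun k ⟨hk, hag⟩ => by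
      have hm : (m : ℕ∞) ≤ wedgeLen σ (u (φ k)) :=
        natCast_le_wedgeLen_iff.mpr fun j hj => (hag j (mem_range.mpr hj)).symm
      rw [← ENat.natCast_toNat (wedgeLen_eq_top_iff.not.mpr (Ne.symm hk))] at hm
      exact_mod_cast hm
  obtain ⟨ψ, hψ, hwψ⟩ := strictMono_subseq_of_tendsto_atTop hw
  have hpos : ∀ i, 0 < w (ψ (i + 1)) := fun i => (Nat.zero_le _).trans_lt (hwψ i.succ_pos)
  refine ⟨σ, fun i => φ (ψ (i + 1)), fun i => w (ψ (i + 1)),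
    hφ.comp (hψ.comp (strictMono_id.add_const 1)),
    ⟨hwψ.comp (strictMono_id.add_const 1), hpos, fun i => ?_⟩⟩
  refine (ENat.natCast_toNat fun htop => ?_).symm
  exact (hpos i).ne' (ENat.toNat_eq_zero.mpr (Or.inr htop))

/-- Schreier-type families of index sets: the traces on a comb with heights `ℓ` of the sets of
`𝒢_n` belong to `TraceFamily ℓ n` (`IsComb.traceFamily_preimage`). -/
inductive TraceFamily (ℓ : ℕ → ℕ) : ℕ → Finset ℕ → Prop
  | zero {J : Finset ℕ} : #J ≤ 1 → TraceFamily ℓ 0 J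
  | succ {n : ℕ} {J : Finset ℕ} (x D : ℕ) (I : Fin D → Finset ℕ)
      (hI : ∀ k, TraceFamily ℓ n (I k)) (hcov : J.erase x ⊆ univ.biUnion I)
      (hD : ∀ i ∈ J.erase x, D ≤ ℓ i) : TraceFamily ℓ (n + 1) J

lemma TraceFamily.succ_of_pos {ℓ : ℕ → ℕ} (hℓ : ∀ i, 0 < ℓ i) {n : ℕ} {J : Finset ℕ}
    (h : TraceFamily ℓ n J) : TraceFamily ℓ (n + 1) J :=
  .succ 0 1 (fun _ => J) (fun _ => h) (fun i hi => by simpa using mem_of_mem_erase hi)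
    (fun i _ => hℓ i)

namespace IsComb

variable {σ : Cantor} {t : ℕ → Cantor} {ℓ : ℕ → ℕ}

lemma traceFamily_succ_preimage (hc : IsComb σ t ℓ) {n D : ℕ} {F : Finset Cantor} {σ' : Cantor}
    (Fs : Fin D → Finset Cantor)
    (hFs : ∀ k, TraceFamily ℓ n ((Fs k).preimage t hc.injective.injOn))
    (hcov : ∀ τ ∈ F, ∃ k, τ ∈ Fs k) (hD : ∀ τ ∈ F, (D : ℕ∞) ≤ wedgeLen σ' τ) :
    TraceFamily ℓ (n + 1) (F.preimage t hc.injective.injOn) := by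
  obtain ⟨x, hx⟩ := hc.exists_forall_ne_wedgeLen_le σ'
  refine .succ x D _ hFs (fun i hi => ?_) (fun i hi => ?_) <;>
    obtain ⟨hix, hi⟩ := mem_erase.mp hi <;> rw [mem_preimage] at hi
  · obtain ⟨k, hk⟩ := hcov _ hi
    exact mem_biUnion.mpr ⟨k, mem_univ k, mem_preimage.mpr hk⟩
  · exact_mod_cast (hD _ hi).trans (hx i hix)

lemma traceFamily_preimage (hc : IsComb σ t ℓ) {n : ℕ} {F : Finset Cantor} {σ' : Cantor}
    {m M : ℕ∞} (h : GS n F σ' m M) : TraceFamily ℓ n (F.preimage t hc.injective.injOn) := by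
  induction h with
  | base d τs σ F h1 h2 h3 hd hF =>
    refine hc.traceFamily_succ_preimage (σ' := σ) (fun k => {τs k}) (fun k => .zero ?_)
      (fun τ hτ => ?_) (fun τ hτ => ?_)
    · refine card_le_one.mpr fun a ha b hb => hc.injective ?_
      rw [mem_preimage, mem_singleton] at ha hb
      rw [ha, hb]
    · obtain ⟨k, rfl⟩ := (hF τ).mp hτ
      exact ⟨k, mem_singleton_self _⟩
    · exact hd.trans ((GS.base d τs σ F h1 h2 h3 hd hF).min_le_wedgeLen hτ)
  | up _ _ _ _ _ _ ih => exact ih.succ_of_pos hc.pos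
  | skipped n d Fs σs mins maxs σ F hGS hdisj hne h0 hmono hlt hd hF ih =>
    have h := GS.skipped n d Fs σs mins maxs σ F hGS hdisj hne h0 hmono hlt hd hF
    exact hc.traceFamily_succ_preimage Fs ih (fun τ hτ => (hF τ).mp hτ) fun τ hτ =>
      hd.trans (h.min_le_wedgeLen hτ)
  | attached n d Fs mins maxs σ F hGS hdisj hord hd hF ih =>
    have h := GS.attached n d Fs mins maxs σ F hGS hdisj hord hd hF
    exact hc.traceFamily_succ_preimage Fs ih (fun τ hτ => (hF τ).mp hτ) fun τ hτ =>
      hd.trans (h.min_le_wedgeLen hτ)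

end IsComb

section ConvexWeights

variable {α : Type*}

lemma sum_biUnion_le_sum_sum [DecidableEq α] {ι : Type*} {f : α → ℝ} (hf : ∀ x, 0 ≤ f x)
    (s : Finset ι) (I : ι → Finset α) : ∑ x ∈ s.biUnion I, f x ≤ ∑ k ∈ s, ∑ x ∈ I k, f x := by
  classical
  induction s using Finset.induction_on with
  | empty => simp
  | insert k s hk ih =>
    rw [biUnion_insert, sum_insert hk]
    have hinter := sum_nonneg fun x (_ : x ∈ I k ∩ s.biUnion I) => hf x
    linarith [sum_union_inter (s₁ := I k) (s₂ := s.biUnion I) (f := f)]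

lemma sum_le_apply_add_sum_erase [DecidableEq α] {f : α → ℝ} (hf : ∀ x, 0 ≤ f x)
    (J : Finset α) (x : α) : ∑ i ∈ J, f i ≤ f x + ∑ i ∈ J.erase x, f i := by
  by_cases hx : x ∈ J
  · rw [add_sum_erase J f hx]
  · rw [erase_eq_of_notMem hx]
    linarith [hf x]

lemma sum_range_le_one_add_mul {s : ℕ → ℝ} {δ : ℝ} (hδ : 0 ≤ δ) (hs : ∀ r, s r ≤ 1)
    (hsmall : ∀ r' r, r' < r → s r' ≠ 0 → s r ≤ δ) (R : ℕ) :
    ∑ r ∈ range R, s r ≤ 1 + R * δ := by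
  induction R with
  | zero => simp
  | succ R ih =>
    rw [sum_range_succ, Nat.cast_succ]
    by_cases h : ∃ r' < R, s r' ≠ 0
    · obtain ⟨r', hr', hne⟩ := h
      linarith [hsmall r' R hr' hne]
    · simp only [not_exists, not_and, not_not] at h
      rw [sum_eq_zero fun r hr => h r (mem_range.mp hr)]
      nlinarith [hs R]

structure IsConvexWeight (a : α →₀ ℝ) : Prop where
  nonneg : ∀ i, 0 ≤ a i
  sum_eq_one : a.sum (fun _ c => c) = 1

lemma IsConvexWeight.single (i : α) : IsConvexWeight (Finsupp.single i (1 : ℝ)) :=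
  ⟨fun j => by classical rw [Finsupp.single_apply]; split_ifs <;> norm_num,
    Finsupp.sum_single_index rfl⟩

lemma IsConvexWeight.sum_le_one {a : α →₀ ℝ} (ha : IsConvexWeight a) (J : Finset α) :
    ∑ i ∈ J, a i ≤ 1 := by
  classical
  calc ∑ i ∈ J, a i ≤ ∑ i ∈ J ∪ a.support, a i :=
        sum_le_sum_of_subset_of_nonneg subset_union_left fun i _ _ => ha.nonneg i
    _ = ∑ i ∈ a.support, a i :=
        (sum_subset subset_union_right fun i _ hi => Finsupp.notMem_support_iff.mp hi).symm
    _ = 1 := ha.sum_eq_one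

noncomputable def average (c : ℕ → α →₀ ℝ) (R : ℕ) : α →₀ ℝ :=
  (R : ℝ)⁻¹ • ∑ r ∈ range R, c r

variable {c : ℕ → α →₀ ℝ} {R : ℕ}

lemma sum_average (J : Finset α) :
    ∑ i ∈ J, average c R i = (R : ℝ)⁻¹ * ∑ r ∈ range R, ∑ i ∈ J, c r i := by
  simp only [average, Finsupp.smul_apply, Finsupp.finsetSum_apply, smul_eq_mul, ← mul_sum]
  rw [sum_comm]

lemma IsConvexWeight.average (hc : ∀ r, IsConvexWeight (c r)) (hR : 0 < R) :
    IsConvexWeight (average c R) := by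
  refine ⟨fun i => ?_, ?_⟩
  · simp only [_root_.average, Finsupp.smul_apply, Finsupp.finsetSum_apply, smul_eq_mul]
    exact mul_nonneg (by positivity) (sum_nonneg fun r _ => (hc r).nonneg i)
  · rw [_root_.average, Finsupp.sum_smul_index fun _ => rfl, ← Finsupp.sum_finsetSum_index
      (fun _ => mul_zero _) fun _ _ _ => mul_add _ _ _]
    simp only [← Finsupp.mul_sum, (hc _).sum_eq_one, mul_one, sum_const, card_range, nsmul_eq_mul]
    exact mul_inv_cancel₀ (by positivity)

lemma exists_mem_support_of_mem_support_average {i : α} (hi : i ∈ (average c R).support) :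
    ∃ r < R, i ∈ (c r).support := by
  rw [Finsupp.mem_support_iff, _root_.average, Finsupp.smul_apply,
    Finsupp.finsetSum_apply] at hi
  obtain ⟨r, hr, hne⟩ := exists_ne_zero_of_sum_ne_zero (right_ne_zero_of_smul hi)
  exact ⟨r, mem_range.mp hr, Finsupp.mem_support_iff.mpr hne⟩

lemma sum_range_apply_le_one (hc : ∀ r, IsConvexWeight (c r))
    (hdisj : ∀ r' r, r' < r → ∀ i, c r' i ≠ 0 → c r i = 0) (R : ℕ) (i : α) :
    ∑ r ∈ range R, c r i ≤ 1 := by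
  simpa using sum_range_le_one_add_mul le_rfl (fun r => by simpa using (hc r).sum_le_one {i})
    (fun r' r hr hne => (hdisj r' r hr i hne).le) R

end ConvexWeights

section SmallWeights

variable {ℓ : ℕ → ℕ}

lemma exists_average_traceFamily_succ_le (hℓ : Monotone ℓ) {n : ℕ} {δ : ℝ} (hδ : 0 ≤ δ)
    (blk : ℕ → ℕ →₀ ℝ) (hblk : ∀ M, IsConvexWeight (blk M))
    (hsupp : ∀ M, ∀ i ∈ (blk M).support, M < i)
    (hsmall : ∀ M J, TraceFamily ℓ n J → ∑ i ∈ J, blk M i ≤ δ / (ℓ M + 1))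
    (N : ℕ) {R : ℕ} (hR : 0 < R) :
    ∃ a : ℕ →₀ ℝ, IsConvexWeight a ∧ (∀ i ∈ a.support, N < i) ∧
      ∀ J, TraceFamily ℓ (n + 1) J → ∑ i ∈ J, a i ≤ 2 * (R : ℝ)⁻¹ + δ := by
  classical
  set next : ℕ → ℕ := fun M => max M ((blk M).support.sup id)
  set B : ℕ → ℕ := fun r => next^[r] N
  set c : ℕ → ℕ →₀ ℝ := fun r => blk (B r)
  have hB : Monotone B := monotone_nat_of_le_succ fun r => by
    simp only [B, Function.iterate_succ_apply']
    exact le_max_left _ _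
  have hbefore : ∀ r' r, r' < r → ∀ i ∈ (c r').support, i ≤ B r := fun r' r hr i hi =>
    calc i ≤ next (B r') := le_max_of_le_right (le_sup (f := id) hi)
      _ = B (r' + 1) := (Function.iterate_succ_apply' _ _ _).symm
      _ ≤ B r := hB hr
  have hdisj : ∀ r' r, r' < r → ∀ i, c r' i ≠ 0 → c r i = 0 := fun r' r hr i hi =>
    Finsupp.notMem_support_iff.mp fun hi' =>
      (hsupp _ i hi').not_ge (hbefore r' r hr i (Finsupp.mem_support_iff.mpr hi))
  refine ⟨average c R, .average (fun r => hblk _) hR, fun i hi => ?_, fun J hJ => ?_⟩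
  · obtain ⟨r, -, hr⟩ := exists_mem_support_of_mem_support_average hi
    exact (hB (Nat.zero_le r)).trans_lt (hsupp _ i hr)
  obtain _ | ⟨x, D, I, hI, hcov, hD⟩ := hJ
  -- the first block meeting `J.erase x` may carry mass `1`, every later one at most `δ`
  have hlate : ∀ r' r, r' < r → ∑ i ∈ J.erase x, c r' i ≠ 0 → ∑ i ∈ J.erase x, c r i ≤ δ := by
    intro r' r hr hne
    obtain ⟨b, hb, hbne⟩ := exists_ne_zero_of_sum_ne_zero hne
    have hDℓ : (D : ℝ) ≤ ℓ (B r) + 1 := by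
      exact_mod_cast ((hD b hb).trans
        (hℓ (hbefore r' r hr b (Finsupp.mem_support_iff.mpr hbne)))).trans (Nat.le_succ _)
    calc ∑ i ∈ J.erase x, c r i ≤ ∑ i ∈ univ.biUnion I, c r i :=
          sum_le_sum_of_subset_of_nonneg hcov fun i _ _ => (hblk _).nonneg i
      _ ≤ ∑ k, ∑ i ∈ I k, c r i := sum_biUnion_le_sum_sum (hblk _).nonneg _ _
      _ ≤ ∑ _k : Fin D, δ / (ℓ (B r) + 1) := sum_le_sum fun k _ => hsmall _ _ (hI k)
      _ = D / (ℓ (B r) + 1) * δ := by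
          rw [sum_const, card_univ, Fintype.card_fin, nsmul_eq_mul]; ring
      _ ≤ 1 * δ := by gcongr; exact div_le_one_of_le₀ hDℓ (by positivity)
      _ = δ := one_mul δ
  have hx := sum_range_apply_le_one (fun r => hblk (B r)) hdisj R x
  have hrest := sum_range_le_one_add_mul hδ (fun r => (hblk _).sum_le_one _) hlate R
  rw [sum_average]
  calc (R : ℝ)⁻¹ * ∑ r ∈ range R, ∑ i ∈ J, c r i
      ≤ (R : ℝ)⁻¹ * (∑ r ∈ range R, c r x + ∑ r ∈ range R, ∑ i ∈ J.erase x, c r i) := by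
        rw [← sum_add_distrib]
        gcongr with r
        exact sum_le_apply_add_sum_erase (hblk _).nonneg J x
    _ ≤ (R : ℝ)⁻¹ * (1 + (1 + R * δ)) := by gcongr
    _ = 2 * (R : ℝ)⁻¹ + δ := by field_simp; ring

lemma exists_convexWeight_traceFamily_le (hℓ : Monotone ℓ) (n N : ℕ) {δ : ℝ} (hδ : 0 < δ) :
    ∃ a : ℕ →₀ ℝ, IsConvexWeight a ∧ (∀ i ∈ a.support, N < i) ∧
      ∀ J, TraceFamily ℓ n J → ∑ i ∈ J, a i ≤ δ := by
  induction n generalizing N δ with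
  | zero =>
    obtain ⟨R, hR⟩ := exists_nat_one_div_lt hδ
    set c : ℕ → ℕ →₀ ℝ := fun r => Finsupp.single (N + 1 + r) 1
    have hdisj : ∀ r' r, r' < r → ∀ i, c r' i ≠ 0 → c r i = 0 := by
      intro r' r hr i hi
      rw [Finsupp.single_apply_ne_zero] at hi
      simp only [c, Finsupp.single_apply, hi.1]
      exact if_neg (by omega)
    refine ⟨average c (R + 1), .average (fun r => .single _) R.succ_pos, fun i hi => ?_,
      fun J hJ => ?_⟩
    · obtain ⟨r, -, hr⟩ := exists_mem_support_of_mem_support_average hi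
      rw [Finsupp.support_single _ one_ne_zero, mem_singleton] at hr
      omega
    obtain ⟨hJ⟩ := hJ
    have hpoint : ∀ i, average c (R + 1) i ≤ ((R + 1 : ℕ) : ℝ)⁻¹ := fun i => by
      have h := sum_average (c := c) (R := R + 1) {i}
      simp only [sum_singleton] at h
      rw [h]
      exact mul_le_of_le_one_right (by positivity)
        (sum_range_apply_le_one (fun r => .single _) hdisj (R + 1) i)
    calc ∑ i ∈ J, average c (R + 1) i ≤ #J • ((R + 1 : ℕ) : ℝ)⁻¹ :=
          sum_le_card_nsmul _ _ _ fun i _ => hpoint i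
      _ ≤ 1 • ((R + 1 : ℕ) : ℝ)⁻¹ := by gcongr
      _ ≤ δ := by simpa using hR.le
  | succ n ih =>
    choose blk hblk hsupp hsmall using fun M => ih M (δ := δ / 2 / (ℓ M + 1)) (by positivity)
    obtain ⟨R, hR⟩ := exists_nat_one_div_lt (by positivity : 0 < δ / 4)
    obtain ⟨a, ha, hsuppa, hsmalla⟩ :=
      exists_average_traceFamily_succ_le hℓ (by positivity) blk hblk hsupp hsmall N R.succ_pos
    refine ⟨a, ha, hsuppa, fun J hJ => (hsmalla J hJ).trans ?_⟩
    rw [one_div] at hR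
    push_cast
    linarith

end SmallWeights

lemma IsComb.gnorm_mapDomain_le {σ : Cantor} {t : ℕ → Cantor} {ℓ : ℕ → ℕ} (hc : IsComb σ t ℓ)
    {n : ℕ} {a : ℕ →₀ ℝ} (ha : ∀ i, 0 ≤ a i) {δ : ℝ} (hδ : 0 ≤ δ)
    (hsmall : ∀ J, TraceFamily ℓ n J → ∑ i ∈ J, a i ≤ δ) :
    gnorm n (a.mapDomain t) ≤ δ := by
  refine Real.sSup_le ?_ hδ
  rintro r ⟨F, hF | ⟨σ', m, M, hGS⟩, rfl⟩
  · simpa [hF] using hδ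
  · rw [← sum_preimage t F hc.injective.injOn _
      fun τ _ hτ => Finsupp.mapDomain_of_notMem_range _ _ hτ]
    simp only [Finsupp.mapDomain_apply hc.injective]
    rw [abs_of_nonneg (sum_nonneg fun i _ => ha i)]
    exact hsmall _ (hc.traceFamily_preimage hGS)

lemma LinearMap.apply_mapDomain {α β : Type*} (L : (β →₀ ℝ) →ₗ[ℝ] ℝ) (t : α → β)
    (a : α →₀ ℝ) : L (a.mapDomain t) = a.sum fun i c => c * L (Finsupp.single (t i) 1) := by
  rw [Finsupp.mapDomain, map_finsuppSum]
  refine Finsupp.sum_congr fun i _ => ?_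
  rw [← Finsupp.smul_single_one (t i) (a i), map_smul, smul_eq_mul]

lemma eventually_apply_single_lt (n : ℕ) {X : Type*} [NormedAddCommGroup X] [NormedSpace ℝ X]
    (T : (Cantor →₀ ℝ) →ₗ[ℝ] X) (hT : ∀ x, ‖T x‖ = gnorm n x) {τ : ℕ → Cantor}
    (hτ : Function.Injective τ) (f : X →L[ℝ] ℝ) {ε : ℝ} (hε : 0 < ε) :
    ∀ᶠ k in atTop, f (T (Finsupp.single (τ k) 1)) < ε := by
  by_contra h
  obtain ⟨φ, hφ, hge⟩ := extraction_of_frequently_atTop (not_eventually.mp h)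
  obtain ⟨σ, g, ℓ, -, hc⟩ := exists_isComb_comp (hτ.comp hφ.injective)
  set δ := ε / (‖f‖ + 1)
  obtain ⟨a, ha, -, hsmall⟩ :=
    exists_convexWeight_traceFamily_le hc.strictMono.monotone n 0 (δ := δ) (by positivity)
  set x := a.mapDomain ((τ ∘ φ) ∘ g)
  have hupper : f (T x) ≤ ‖f‖ * δ := by
    refine (le_abs_self _).trans ((f.le_opNorm _).trans ?_)
    rw [hT]
    gcongr
    exact hc.gnorm_mapDomain_le ha.nonneg (by positivity) hsmall
  have hlower : ε ≤ f (T x) := by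
    rw [← ContinuousLinearMap.coe_coe f, ← LinearMap.comp_apply, LinearMap.apply_mapDomain]
    calc ε = a.sum fun _ c => c * ε := by rw [← Finsupp.sum_mul, ha.sum_eq_one, one_mul]
      _ ≤ _ := sum_le_sum fun i _ =>
        mul_le_mul_of_nonneg_left (not_lt.mp (hge (g i))) (ha.nonneg i)
  have hδ : ‖f‖ * δ < ε := by
    rw [mul_div_assoc', div_lt_iff₀ (by positivity)]
    nlinarith [norm_nonneg f]
  linarith

theorem Xn_unit_vectors_weakly_null_general (n : ℕ) (X : Type*)
    [NormedAddCommGroup X] [NormedSpace ℝ X]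
    (T : (Cantor →₀ ℝ) →ₗ[ℝ] X) (hT : ∀ x, ‖T x‖ = gnorm n x)
    (τ : ℕ → Cantor) (hτ : Function.Injective τ) :
    ∀ f : X →L[ℝ] ℝ,
      Filter.Tendsto (fun k => f (T (Finsupp.single (τ k) (1 : ℝ))))
        Filter.atTop (nhds 0) := by
  intro f
  refine tendsto_order.mpr ⟨fun a ha => ?_, fun a ha => eventually_apply_single_lt n T hT hτ f ha⟩
  filter_upwards [eventually_apply_single_lt n T hT hτ (-f) (neg_pos.mpr ha)] with k hk
  simpa [neg_lt] using hk

theorem Xn_unit_vectors_weakly_null (n : ℕ) (hn : 1 ≤ n) (X : Type*)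
    [NormedAddCommGroup X] [NormedSpace ℝ X] [CompleteSpace X]
    (T : (Cantor →₀ ℝ) →ₗ[ℝ] X) (hT : ∀ x, ‖T x‖ = gnorm n x)
    (hdense : DenseRange T)
    (τ : ℕ → Cantor) (hτ : Function.Injective τ) :
    ∀ f : X →L[ℝ] ℝ,
      Filter.Tendsto (fun k => f (T (Finsupp.single (τ k) (1 : ℝ))))
        Filter.atTop (nhds 0) :=
  Xn_unit_vectors_weakly_null_general n X T hT τ hτ
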